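/- arXiv:1712.00135 — 5 statements merged into one kernel-verified Lean document; each statement's English description precedes it below -/
import Mathlib

section
/- Let A be a commutative ℝ-algebra, B = A[ε]/(ε²) the dual numbers over A with square-zero ideal I = εB, V a B-module, and F : V × V → B an alternating B-bilinear form. Let e3, e4, eθ ∈ V, and let f, f̄, a ∈ I with λ := 1 + a (a unit of B, with λ⁻¹ = 1 − a). Define ρF := (1/2)F(e3,e4), βF := F(eθ,e4), β̄F := F(eθ,e3) and assume βF, β̄F ∈ I. Then for the composite transformed frame e3' = λ(e3 + f̄·eθ + (1/4)f̄²·e4), eθ' = (1 + (1/2)f·f̄)·eθ + (1/2)f·e3 + (1/2)(f̄ + (1/4)f·f̄²)·e4, e4' = λ⁻¹·((1 + (1/2)f·f̄ + (1/16)f²·f̄²)·e4 + (f + (1/4)f²·f̄)·eθ + (1/4)f²·e3), the following hold as exact equalities in B: F(eθ',e4') = βF + f·ρF, F(eθ',e3') = β̄F − f̄·ρF, and (1/2)F(e3',e4') = ρF. (This is the O(ε²)-transformation law for the electromagnetic null components, with all quadratically small products vanishing since ε² = 0.) -/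
set_option maxHeartbeats 1000000


noncomputable section

open scoped DualNumber

/-- The square-zero ideal `I = ε·B` of the dual numbers `B = A[ε]/(ε²)`. -/
def smallIdeal (A : Type*) [CommRing A] : Ideal (DualNumber A) :=
  Ideal.span {(DualNumber.eps : DualNumber A)}

/-- `O(ε²)`-transformation law for the electromagnetic null components
under the composite frame transformation, modeled exactly in the dual numbers
`B = A[ε]/(ε²)`: with `f, f̄, a` in the square-zero ideal `I`, `λ = 1 + a`
(a unit with `λ⁻¹ = 1 − a`), and `βF, β̄F ∈ I`, one has exactly
`F(eθ',e4') = βF + f·ρF`, `F(eθ',e3') = β̄F − f̄·ρF`, `(1/2)F(e3',e4') = ρF`. -/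
theorem em_components_composite_transformation_dual_numbers
    {A : Type*} [CommRing A] [Algebra ℝ A]
    {V : Type*} [AddCommGroup V] [Module (DualNumber A) V]
    [Invertible (2 : DualNumber A)]
    (F : V →ₗ[DualNumber A] V →ₗ[DualNumber A] (DualNumber A))
    (halt : ∀ x : V, F x x = 0)
    (e3 e4 eθ : V)
    (f fb a : DualNumber A)
    (hf : f ∈ smallIdeal A) (hfb : fb ∈ smallIdeal A) (ha : a ∈ smallIdeal A)
    (lam : DualNumber A) (hlam : lam = 1 + a)
    (ρF βF βbF : DualNumber A)
    (hρF : ρF = ⅟(2 : DualNumber A) * F e3 e4)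
    (hβF : βF = F eθ e4) (hβbF : βbF = F eθ e3)
    (hβFI : βF ∈ smallIdeal A) (hβbFI : βbF ∈ smallIdeal A)
    (e3' eθ' e4' : V)
    (he3' : e3' = lam • (e3 + fb • eθ
      + (⅟(2 : DualNumber A) * ⅟(2 : DualNumber A) * fb ^ 2) • e4))
    (heθ' : eθ' = (1 + ⅟(2 : DualNumber A) * (f * fb)) • eθ
      + (⅟(2 : DualNumber A) * f) • e3
      + (⅟(2 : DualNumber A) * (fb
          + ⅟(2 : DualNumber A) * ⅟(2 : DualNumber A) * (f * fb ^ 2))) • e4)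
    (he4' : e4' = (1 - a) • ((1 + ⅟(2 : DualNumber A) * (f * fb)
          + ⅟(2 : DualNumber A) * ⅟(2 : DualNumber A) * ⅟(2 : DualNumber A)
            * ⅟(2 : DualNumber A) * (f ^ 2 * fb ^ 2)) • e4
        + (f + ⅟(2 : DualNumber A) * ⅟(2 : DualNumber A) * (f ^ 2 * fb)) • eθ
        + (⅟(2 : DualNumber A) * ⅟(2 : DualNumber A) * f ^ 2) • e3)) :
    F eθ' e4' = βF + f * ρF
      ∧ F eθ' e3' = βbF - fb * ρF
      ∧ ⅟(2 : DualNumber A) * F e3' e4' = ρF := by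

  have heps2 : (DualNumber.eps : DualNumber A) * DualNumber.eps = 0 :=
    DualNumber.eps_mul_eps
  have hskew : ∀ x y : V, F y x = - F x y := by
    intro x y
    have h := halt (x + y)
    simp only [map_add, LinearMap.add_apply, halt] at h
    linear_combination h
  rw [smallIdeal, Ideal.mem_span_singleton] at hf hfb ha hβFI hβbFI
  obtain ⟨cf, rfl⟩ := hf
  obtain ⟨cfb, rfl⟩ := hfb
  obtain ⟨ca, rfl⟩ := ha
  subst hlam hρF he3' heθ' he4'
  obtain ⟨cb, hcb⟩ := hβFI
  obtain ⟨cbb, hcbb⟩ := hβbFI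
  have hb4 : F eθ e4 = DualNumber.eps * cb := by rw [← hβF, hcb]
  have hb3 : F eθ e3 = DualNumber.eps * cbb := by rw [← hβbF, hcbb]
  have hc4 : F e4 eθ = -(DualNumber.eps * cb) := by rw [hskew eθ e4, hb4]
  have hc3 : F e3 eθ = -(DualNumber.eps * cbb) := by rw [hskew eθ e3, hb3]
  simp only [map_add, map_smul, LinearMap.add_apply, LinearMap.smul_apply,
    smul_eq_mul, halt, hskew e3 e4, hb4, hb3, hc4, hc3, hcb, hcbb]
  have h2 : (DualNumber.eps : DualNumber A) ^ 2 = 0 := by rw [sq, heps2]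
  have h3 : (DualNumber.eps : DualNumber A) ^ 3 = 0 := by rw [pow_succ, h2, zero_mul]
  have h4 : (DualNumber.eps : DualNumber A) ^ 4 = 0 := by rw [pow_succ, h3, zero_mul]
  have h5 : (DualNumber.eps : DualNumber A) ^ 5 = 0 := by rw [pow_succ, h4, zero_mul]
  have h6 : (DualNumber.eps : DualNumber A) ^ 6 = 0 := by rw [pow_succ, h5, zero_mul]
  refine ⟨?_, ?_, ?_⟩ <;>
  · ring_nf
    simp only [h2, h3, h4, h5, h6, mul_zero, zero_mul, add_zero, zero_add, neg_zero,
      sub_zero]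
    try ring
end
end

section
/- In the linearized setting, let ϑ, ϑ̄, η, ξ, α, βF ∈ I and define 𝔣 := −eθ(βF) + Z·βF + ϑ·ρF. Assume, as exact equalities in B, the linearized transport equations e3(ϑ) + ((1/2)κ̄ − 2ω̄)ϑ = 2(eθ(η) − Z·η) − (1/2)κ·ϑ̄ and e4(ϑ) + (κ + 2ω)ϑ = 2(eθ(ξ) − Z·ξ) − 2α. Then, exactly in B: e3(𝔣) = −(eθ(e3(βF)) − Z·e3(βF)) + (1/2)κ̄·(eθ(βF) − Z·βF) − ρF·(((3/2)κ̄ − 2ω̄)ϑ − 2(eθ(η) − Z·η) + (1/2)κ·ϑ̄), and e4(𝔣) = −(eθ(e4(βF)) − Z·e4(βF)) + (1/2)κ·(eθ(βF) − Z·βF) − ρF·(2κ·ϑ − 2(eθ(ξ) − Z·ξ) + 2ω·ϑ + 2α). -/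
/-!
Algebraic model of the linearized Einstein–Maxwell system around Reissner–Nordström.
`B = A[ε]/(ε²)` is modeled by the dual numbers `DualNumber A` over a commutative
`ℝ`-algebra `A`, and the square-zero ideal `I = ε·B` by `smallIdeal A`.
Equality "modulo O(ε²)" is exact equality in `B`; products of two elements of `I` vanish.
-/

noncomputable section

open scoped DualNumber

/-- The linearized setting: `ℝ`-linear derivations `e3, e4, eθ` on `B = DualNumber A`,
background elements `κ, κ̄, ω, ω̄, ρ, ρF, Z, r` (with `r` and `κ̄` invertible, inverses
`ir` and `iκ'`), the background transport relations modulo the square-zero ideal `I`,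
and the commutator relations valid on every element of `I`. -/
structure RNSetting (A : Type*) [CommRing A] [Algebra ℝ A] where
  e3 : Derivation ℝ (DualNumber A) (DualNumber A)
  e4 : Derivation ℝ (DualNumber A) (DualNumber A)
  eθ : Derivation ℝ (DualNumber A) (DualNumber A)
  κ : DualNumber A
  κ' : DualNumber A
  ω : DualNumber A
  ω' : DualNumber A
  ρ : DualNumber A
  ρF : DualNumber A
  Z : DualNumber A
  r : DualNumber A
  ir : DualNumber A
  iκ' : DualNumber A
  hr : r * ir = 1
  hκ' : κ' * iκ' = 1
  pres_e3 : ∀ x ∈ smallIdeal A, e3 x ∈ smallIdeal A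
  pres_e4 : ∀ x ∈ smallIdeal A, e4 x ∈ smallIdeal A
  pres_eθ : ∀ x ∈ smallIdeal A, eθ x ∈ smallIdeal A
  he3κ' : e3 κ' - (-((1/2 : ℝ) • (κ' * κ')) - 2 * ω' * κ') ∈ smallIdeal A
  he4κ' : e4 κ' - (-((1/2 : ℝ) • (κ * κ')) + 2 * ω * κ' + 2 * ρ) ∈ smallIdeal A
  he3κ : e3 κ - (-((1/2 : ℝ) • (κ * κ')) + 2 * ω' * κ + 2 * ρ) ∈ smallIdeal A
  he4κ : e4 κ - (-((1/2 : ℝ) • (κ * κ)) - 2 * ω * κ) ∈ smallIdeal A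
  hωω' : e3 ω + e4 ω' - (ρ + ρF ^ 2) ∈ smallIdeal A
  he3ρ : e3 ρ - (-((3/2 : ℝ) • (κ' * ρ)) - κ' * ρF ^ 2) ∈ smallIdeal A
  he4ρ : e4 ρ - (-((3/2 : ℝ) • (κ * ρ)) - κ * ρF ^ 2) ∈ smallIdeal A
  he3ρF : e3 ρF - (-(κ' * ρF)) ∈ smallIdeal A
  he4ρF : e4 ρF - (-(κ * ρF)) ∈ smallIdeal A
  he3r : e3 r - (1/2 : ℝ) • (r * κ') ∈ smallIdeal A
  he4r : e4 r - (1/2 : ℝ) • (r * κ) ∈ smallIdeal A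
  he3Z : e3 Z - (-((1/2 : ℝ) • (κ' * Z))) ∈ smallIdeal A
  he4Z : e4 Z - (-((1/2 : ℝ) • (κ * Z))) ∈ smallIdeal A
  heθZ : eθ Z - (ρ + (1/4 : ℝ) • (κ * κ') - ρF ^ 2 - Z ^ 2) ∈ smallIdeal A
  heθκ : eθ κ ∈ smallIdeal A
  heθκ' : eθ κ' ∈ smallIdeal A
  heθω : eθ ω ∈ smallIdeal A
  heθω' : eθ ω' ∈ smallIdeal A
  heθρ : eθ ρ ∈ smallIdeal A
  heθρF : eθ ρF ∈ smallIdeal A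
  heθr : eθ r ∈ smallIdeal A
  commθ3 : ∀ x ∈ smallIdeal A, eθ (e3 x) - e3 (eθ x) = (1/2 : ℝ) • (κ' * eθ x)
  commθ4 : ∀ x ∈ smallIdeal A, eθ (e4 x) - e4 (eθ x) = (1/2 : ℝ) • (κ * eθ x)
  comm34 : ∀ x ∈ smallIdeal A, e3 (e4 x) - e4 (e3 x) = 2 * ω' * e4 x - 2 * ω * e3 x

namespace RNSetting

variable {A : Type*} [CommRing A] [Algebra ℝ A]

/-- The wave operator
`□u = −e4(e3 u) + eθ(eθ u) − (1/2)κ̄·e4(u) + (−(1/2)κ + 2ω)·e3(u) + Z·eθ(u)`. -/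
def box (S : RNSetting A) (u : DualNumber A) : DualNumber A :=
  -S.e4 (S.e3 u) + S.eθ (S.eθ u) - (1/2 : ℝ) • (S.κ' * S.e4 u)
    + (-((1/2 : ℝ) • S.κ) + 2 * S.ω) * S.e3 u + S.Z * S.eθ u

/-- The operator `P̄(u) = r·κ̄⁻¹·e3(u) + (1/2)·r·u`. -/
def Pb (S : RNSetting A) (u : DualNumber A) : DualNumber A :=
  S.r * S.iκ' * S.e3 u + (1/2 : ℝ) • (S.r * u)

/-- The operator `Q(u) = r·κ̄·e4(u) + (1/2)·r·κ·κ̄·u`. -/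
def Qop (S : RNSetting A) (u : DualNumber A) : DualNumber A :=
  S.r * S.κ' * S.e4 u + (1/2 : ℝ) • (S.r * S.κ * S.κ' * u)


lemma small_mul_small {x y : DualNumber A} (hx : x ∈ smallIdeal A)
    (hy : y ∈ smallIdeal A) : x * y = 0 := by
  rw [smallIdeal, Ideal.mem_span_singleton] at hx hy
  obtain ⟨a, rfl⟩ := hx
  obtain ⟨b, rfl⟩ := hy
  have : (DualNumber.eps : DualNumber A) * DualNumber.eps = 0 := DualNumber.eps_mul_eps
  ring_nf
  simp [pow_two, this]

/-- the null derivatives `e3(𝔣)` and `e4(𝔣)` of the invariant quantity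
`𝔣 = −eθ(βF) + Z·βF + ϑ·ρF`, given the linearized transport equations for `ϑ`. -/
theorem e3_e4_of_frakf (S : RNSetting A) (vθ vθb η ξ α βF : DualNumber A)
    (hvθ : vθ ∈ smallIdeal A) (hvθb : vθb ∈ smallIdeal A) (hη : η ∈ smallIdeal A)
    (hξ : ξ ∈ smallIdeal A) (hα : α ∈ smallIdeal A) (hβF : βF ∈ smallIdeal A)
    (frakf : DualNumber A) (hf : frakf = -S.eθ βF + S.Z * βF + vθ * S.ρF)
    (ht3 : S.e3 vθ + ((1/2 : ℝ) • S.κ' - 2 * S.ω') * vθ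
      = 2 * (S.eθ η - S.Z * η) - (1/2 : ℝ) • (S.κ * vθb))
    (ht4 : S.e4 vθ + (S.κ + 2 * S.ω) * vθ = 2 * (S.eθ ξ - S.Z * ξ) - 2 * α) :
    S.e3 frakf
        = -(S.eθ (S.e3 βF) - S.Z * S.e3 βF)
          + (1/2 : ℝ) • (S.κ' * (S.eθ βF - S.Z * βF))
          - S.ρF * (((3/2 : ℝ) • S.κ' - 2 * S.ω') * vθ - 2 * (S.eθ η - S.Z * η)
            + (1/2 : ℝ) • (S.κ * vθb))
      ∧ S.e4 frakf
        = -(S.eθ (S.e4 βF) - S.Z * S.e4 βF)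
          + (1/2 : ℝ) • (S.κ * (S.eθ βF - S.Z * βF))
          - S.ρF * (2 * S.κ * vθ - 2 * (S.eθ ξ - S.Z * ξ) + 2 * S.ω * vθ + 2 * α) := by
  subst hf
  have hc3 := S.commθ3 βF hβF
  have hc4 := S.commθ4 βF hβF
  have h1 := small_mul_small S.he3Z hβF
  have h2 := small_mul_small hvθ S.he3ρF
  have h3 := small_mul_small S.he4Z hβF
  have h4 := small_mul_small hvθ S.he4ρF
  simp only [map_add, map_neg, Derivation.leibniz, smul_eq_mul, Algebra.smul_def] at *
  constructor
  · have hhalf : (algebraMap ℝ (DualNumber A)) (3/2) = (algebraMap ℝ (DualNumber A)) (1/2) + 1 := by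
      rw [← map_one (algebraMap ℝ (DualNumber A)), ← map_add]; norm_num
    linear_combination hc3 + h1 + h2 + S.ρF * ht3 + vθ * S.ρF * S.κ' * hhalf
  · linear_combination hc4 + h3 + h4 + S.ρF * ht4

end RNSetting
end
end

section
/- (Teukolsky equation for α.) In the linearized setting, let α, β, ϑ, ξ, βF ∈ I, define 𝔣 := −eθ(βF) + Z·βF + ϑ·ρF, and assume, as exact equalities in B, the linearized Bianchi and structure equations: e3(α) + (1/2)κ̄·α = (eθ(β) − Z·β) + 4ω̄·α − (3/2)ϑ·ρ − ρF·𝔣; e4(β) + 2(κ + ω)β = eθ(α) + 2Z·α + 3ξ·ρ + ρF·(e4(βF) + 2ω·βF − 2ξ·ρF); e4(ϑ) + (κ + 2ω)ϑ = 2(eθ(ξ) − Z·ξ) − 2α. Then, exactly in B: □α = −4ω̄·e4(α) + (2κ + 4ω)·e3(α) + ((1/2)κκ̄ + 2ωκ̄ − 4ρ + 4ρF² − 4e4(ω̄) − 10κω̄ − 8ωω̄ + 4Z²)·α + ρF·(2e4(𝔣) + (2κ + 4ω)·𝔣). -/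
/-!
Algebraic model of the linearized Einstein–Maxwell system around Reissner–Nordström.
`B = A[ε]/(ε²)` is modeled by the dual numbers `DualNumber A` over a commutative
`ℝ`-algebra `A`, and the square-zero ideal `I = ε·B` by `smallIdeal A`.
Equality "modulo O(ε²)" is exact equality in `B`; products of two elements of `I` vanish.
-/

noncomputable section

open scoped DualNumber

namespace RNSetting

variable {A : Type*} [CommRing A] [Algebra ℝ A]

/-- Products of two elements of the square-zero ideal vanish. -/
lemma smallIdeal_mul_eq_zero {A : Type*} [CommRing A] {x y : DualNumber A}
    (hx : x ∈ smallIdeal A) (hy : y ∈ smallIdeal A) : x * y = 0 := by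
  rw [smallIdeal, Ideal.mem_span_singleton'] at hx hy
  obtain ⟨a, rfl⟩ := hx
  obtain ⟨b, rfl⟩ := hy
  calc a * DualNumber.eps * (b * DualNumber.eps)
      = a * b * (DualNumber.eps * DualNumber.eps) := by ring
    _ = 0 := by rw [DualNumber.eps_mul_eps, mul_zero]

lemma smallIdeal_cancel {A : Type*} [CommRing A] {x v p : DualNumber A}
    (hxv : x - v ∈ smallIdeal A) (hp : p ∈ smallIdeal A) : x * p = v * p := by
  have h := smallIdeal_mul_eq_zero hxv hp
  linear_combination h

lemma derivation_map_ofNat {A : Type*} [CommRing A] [Algebra ℝ A]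
    (D : Derivation ℝ (DualNumber A) (DualNumber A)) (n : ℕ) [n.AtLeastTwo] :
    D (OfNat.ofNat n : DualNumber A) = 0 := by
  rw [← Nat.cast_ofNat]; exact D.map_natCast _

lemma half_package (A : Type*) [CommRing A] [Algebra ℝ A] :
    ∃ h : DualNumber A, h * 2 = 1 ∧ (∀ x : DualNumber A, (1/2 : ℝ) • x = h * x) ∧
      (∀ x : DualNumber A, (3/2 : ℝ) • x = 3 * (h * x)) ∧
      (∀ x : DualNumber A, (1/4 : ℝ) • x = h * (h * x)) := by
  refine ⟨algebraMap ℝ (DualNumber A) (1/2), ?_, fun x => Algebra.smul_def _ _, ?_, ?_⟩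
  · rw [← map_ofNat (algebraMap ℝ (DualNumber A)) 2, ← map_mul]
    norm_num
  · intro x
    rw [Algebra.smul_def, show (3/2 : ℝ) = 3 * (1/2) by norm_num, map_mul,
      map_ofNat, mul_assoc]
  · intro x
    rw [Algebra.smul_def, show (1/4 : ℝ) = (1/2) * (1/2) by norm_num, map_mul, mul_assoc]

/-- Teukolsky equation for `α`, coupled to `𝔣 = −eθ(βF) + Z·βF + ϑ·ρF`. -/
theorem teukolsky_alpha (S : RNSetting A) (α β vθ ξ βF : DualNumber A)
    (hα : α ∈ smallIdeal A) (hβ : β ∈ smallIdeal A) (hvθ : vθ ∈ smallIdeal A)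
    (hξ : ξ ∈ smallIdeal A) (hβF : βF ∈ smallIdeal A)
    (frakf : DualNumber A) (hf : frakf = -S.eθ βF + S.Z * βF + vθ * S.ρF)
    (hB1 : S.e3 α + (1/2 : ℝ) • (S.κ' * α)
      = (S.eθ β - S.Z * β) + 4 * S.ω' * α - (3/2 : ℝ) • (vθ * S.ρ) - S.ρF * frakf)
    (hB2 : S.e4 β + 2 * (S.κ + S.ω) * β
      = S.eθ α + 2 * S.Z * α + 3 * ξ * S.ρ
        + S.ρF * (S.e4 βF + 2 * S.ω * βF - 2 * ξ * S.ρF))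
    (hB3 : S.e4 vθ + (S.κ + 2 * S.ω) * vθ = 2 * (S.eθ ξ - S.Z * ξ) - 2 * α) :
    S.box α
      = -(4 * S.ω' * S.e4 α) + (2 * S.κ + 4 * S.ω) * S.e3 α
        + ((1/2 : ℝ) • (S.κ * S.κ') + 2 * S.ω * S.κ' - 4 * S.ρ + 4 * S.ρF ^ 2
            - 4 * S.e4 S.ω' - 10 * (S.κ * S.ω') - 8 * (S.ω * S.ω') + 4 * S.Z ^ 2) * α
        + S.ρF * (2 * S.e4 frakf + (2 * S.κ + 4 * S.ω) * frakf) := by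
  classical
  -- memberships
  have hfI : frakf ∈ smallIdeal A := by
    rw [hf]
    exact Ideal.add_mem _ (Ideal.add_mem _ (neg_mem (S.pres_eθ _ hβF))
      (Ideal.mul_mem_left _ _ hβF)) (Ideal.mul_mem_right _ _ hvθ)
  have hGI : S.e4 βF + 2 * S.ω * βF - 2 * ξ * S.ρF ∈ smallIdeal A := by
    refine Ideal.sub_mem _ (Ideal.add_mem _ (S.pres_e4 _ hβF) ?_) ?_
    · exact Ideal.mul_mem_left _ _ hβF
    · exact Ideal.mul_mem_right _ _ (Ideal.mul_mem_left _ _ hξ)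
  -- background reductions
  have R1 : S.e4 S.Z * β = -((1/2 : ℝ) • (S.κ * S.Z)) * β := smallIdeal_cancel S.he4Z hβ
  have R2 : S.e4 S.Z * βF = -((1/2 : ℝ) • (S.κ * S.Z)) * βF := smallIdeal_cancel S.he4Z hβF
  have R3 : S.e4 S.κ' * α = (-((1/2 : ℝ) • (S.κ * S.κ')) + 2 * S.ω * S.κ' + 2 * S.ρ) * α :=
    smallIdeal_cancel S.he4κ' hα
  have R4 : S.e4 S.ρ * vθ = (-((3/2 : ℝ) • (S.κ * S.ρ)) - S.κ * S.ρF ^ 2) * vθ :=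
    smallIdeal_cancel S.he4ρ hvθ
  have R5 : S.e4 S.ρF * frakf = -(S.κ * S.ρF) * frakf := smallIdeal_cancel S.he4ρF hfI
  have R6 : S.e4 S.ρF * vθ = -(S.κ * S.ρF) * vθ := smallIdeal_cancel S.he4ρF hvθ
  have R7 : S.eθ S.Z * α = (S.ρ + (1/4 : ℝ) • (S.κ * S.κ') - S.ρF ^ 2 - S.Z ^ 2) * α :=
    smallIdeal_cancel S.heθZ hα
  have Z1 : S.eθ S.ρ * ξ = 0 := smallIdeal_mul_eq_zero S.heθρ hξ
  have Z2 : S.eθ S.ρF * (S.e4 βF + 2 * S.ω * βF - 2 * ξ * S.ρF) = 0 :=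
    smallIdeal_mul_eq_zero S.heθρF hGI
  have Z3 : S.eθ S.κ * β = 0 := smallIdeal_mul_eq_zero S.heθκ hβ
  have Z4 : S.eθ S.ω * β = 0 := smallIdeal_mul_eq_zero S.heθω hβ
  have Z5 : S.eθ S.ω * βF = 0 := smallIdeal_mul_eq_zero S.heθω hβF
  have Z6 : S.eθ S.ρF * ξ = 0 := smallIdeal_mul_eq_zero S.heθρF hξ
  -- commutators
  have E6 : S.eθ (S.e4 β) - S.e4 (S.eθ β) = (1/2 : ℝ) • (S.κ * S.eθ β) := S.commθ4 β hβ
  have E7 : S.eθ (S.e4 βF) - S.e4 (S.eθ βF) = (1/2 : ℝ) • (S.κ * S.eθ βF) := S.commθ4 βF hβF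
  -- numeral derivatives
  have d42 := derivation_map_ofNat S.e4 2
  have d43 := derivation_map_ofNat S.e4 3
  have d44 := derivation_map_ofNat S.e4 4
  have dθ2 := derivation_map_ofNat S.eθ 2
  have dθ3 := derivation_map_ofNat S.eθ 3
  have dθ4 := derivation_map_ofNat S.eθ 4
  -- differentiated equations
  have h1 := congrArg S.e4 hB1
  have h2 := congrArg S.eθ hB2
  have h5 := congrArg S.e4 hf
  simp only [map_add, map_sub, map_neg, Derivation.map_smul, Derivation.leibniz,
    smul_eq_mul, d42, d43, d44, dθ2, dθ3, dθ4, mul_zero, zero_mul, add_zero, zero_add] at h1 h2 h5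
  -- replace real smul by multiplication with the algebra image of 1/2
  obtain ⟨h, hrel, hs12, hs32, hs14⟩ := half_package A
  rw [RNSetting.box]
  simp only [hs12, hs32, hs14] at h1 h2 h5 E6 E7 R1 R2 R3 R4 R7 hB1 ⊢
  linear_combination (-1 : DualNumber A) * h1 - h2
    + (3 * (h * S.ρ) - S.ρF ^ 2) * hB3
    + (-(h * S.κ * S.ρF) - 2 * S.ω * S.ρF) * hf
    - S.ρF * h5 + E6 - S.ρF * E7
    + (-(h * S.κ) - 2 * S.κ - 2 * S.ω) * hB1
    + S.Z * hB2
    + R1 - S.ρF * R2 + h * R3 + 3 * h * R4 + R5 - S.ρF * R6 - 2 * R7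
    - 3 * Z1 - Z2 + 2 * Z3 + 2 * Z4 - 2 * S.ρF * Z5 + 2 * S.ρF * Z6
    + (3 * S.ρ * S.eθ ξ - 2 * S.ρ * α - 3 * S.ρ * S.Z * ξ + 2 * S.κ' * S.ω * α
        - 2 * S.κ * S.ω' * α + S.κ * S.ρF * frakf - 2 * S.κ * S.ρF ^ 2 * vθ - 3 * h * S.κ * S.ρ * vθ
        - h * S.κ * S.κ' * α) * hrel


end RNSetting
end
end

section
/- In the linearized setting, for every f ∈ I one has, exactly in B: e3(Q(f)) = (1/r)·κ̄·Q(P̄(f)) − (1/2)·κ̄·Q(f) + (−κκ̄² + 2ρκ̄)·P̄(f). -/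
/-!
Algebraic model of the linearized Einstein–Maxwell system around Reissner–Nordström.
`B = A[ε]/(ε²)` is modeled by the dual numbers `DualNumber A` over a commutative
`ℝ`-algebra `A`, and the square-zero ideal `I = ε·B` by `smallIdeal A`.
Equality "modulo O(ε²)" is exact equality in `B`; products of two elements of `I` vanish.
-/

noncomputable section

open scoped DualNumber

namespace RNSetting

variable {A : Type*} [CommRing A] [Algebra ℝ A]

set_option maxHeartbeats 4000000 in
/-- `e3` applied to `Q(f)` for `f ∈ I`. -/
theorem e3_Qop (S : RNSetting A) (f : DualNumber A) (hf : f ∈ smallIdeal A) :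
    S.e3 (S.Qop f)
      = S.ir * S.κ' * S.Qop (S.Pb f)
        - (1/2 : ℝ) • (S.κ' * S.Qop f)
        + (-(S.κ * S.κ' ^ 2) + 2 * S.ρ * S.κ') * S.Pb f := by
  have key : ∀ x ∈ smallIdeal A, ∀ y ∈ smallIdeal A, x * y = 0 := by
    intro x hx y hy
    rw [smallIdeal, Ideal.mem_span_singleton] at hx hy
    obtain ⟨u, rfl⟩ := hx
    obtain ⟨v, rfl⟩ := hy
    calc (DualNumber.eps * u) * (DualNumber.eps * v)
        = (DualNumber.eps * DualNumber.eps) * (u * v) := by ring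
      _ = 0 := by rw [DualNumber.eps_mul_eps, zero_mul]
  have hf3 : S.e3 f ∈ smallIdeal A := S.pres_e3 f hf
  have hf4 : S.e4 f ∈ smallIdeal A := S.pres_e4 f hf
  have Z1 := key _ S.he3r _ hf4
  have Z2 := key _ S.he3κ' _ hf4
  have Z3 := key _ S.he3r _ hf
  have Z4 := key _ S.he3κ _ hf
  have Z5 := key _ S.he3κ' _ hf
  have Z6 := key _ S.he4r _ hf3
  have Z7 := key _ S.he4κ' _ hf3
  have Z8 := key _ S.he4r _ hf
  have C34 := S.comm34 f hf
  have h1 : S.κ' • S.e4 S.iκ' + S.iκ' • S.e4 S.κ' = 0 := by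
    rw [← Derivation.leibniz, S.hκ', Derivation.map_one_eq_zero]
  have W1 : S.e4 S.iκ' = -(S.iκ' * S.iκ') * S.e4 S.κ' := by
    simp only [smul_eq_mul] at h1
    linear_combination S.iκ' * h1 - S.e4 S.iκ' * S.hκ'
  have h2 : (2 : DualNumber A) * (algebraMap ℝ (DualNumber A)) (1/2) = 1 := by
    rw [← map_ofNat (algebraMap ℝ (DualNumber A)) 2, ← map_mul]
    norm_num
  simp only [Algebra.smul_def] at Z1 Z2 Z3 Z4 Z5 Z6 Z7 Z8
  simp only [Qop, Pb, map_add, Derivation.leibniz, Derivation.map_smul, smul_eq_mul,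
    Algebra.smul_def, Derivation.map_algebraMap, mul_zero, zero_mul, add_zero, zero_add]
  set H : DualNumber A := (algebraMap ℝ (DualNumber A)) (1/2) with hH
  linear_combination
      (S.r*S.κ') * C34 + S.κ' * Z1 + (S.κ*S.κ'*H) * Z3 + S.r * Z2 + (S.r*S.κ*H) * Z5
    + (S.r*S.κ'*H) * Z4
    - (S.r*S.ir*S.κ'*S.κ'*S.iκ') * Z6 - (S.r*S.ir*S.κ'*S.κ'*H) * Z8
    - (S.r*S.r*S.ir*S.κ'*S.κ'*(S.e3 f)) * W1
    + (S.r*S.r*S.ir*S.κ'*S.κ'*S.iκ'*S.iκ') * Z7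
    + (-(S.r*S.κ'*S.κ'*(S.e4 f)*H) - S.r*S.κ'*S.κ'*S.iκ'*(S.e4 (S.e3 f))
       + 2*(S.r*S.κ'*S.κ'*S.iκ'*S.iκ'*S.ρ*(S.e3 f))
       + 2*(S.r*S.κ'*S.κ'*S.κ'*S.iκ'*S.iκ'*S.ω*(S.e3 f))
       - 2*(S.r*S.κ*S.κ'*S.κ'*f*H*H)
       - 2*(S.r*S.κ*S.κ'*S.κ'*S.iκ'*(S.e3 f)*H)
       - (S.r*S.κ*S.κ'*S.κ'*S.κ'*S.iκ'*S.iκ'*(S.e3 f)*H)) * S.hr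
    + (-(S.r*S.κ'*(S.e4 (S.e3 f))) + 2*(S.r*S.κ'*S.ω*(S.e3 f))
       + 2*(S.r*S.κ'*S.iκ'*S.ρ*(S.e3 f)) + 2*(S.r*S.κ'*S.κ'*S.iκ'*S.ω*(S.e3 f))
       + S.r*S.κ*S.κ'*(S.e3 f) - 3*(S.r*S.κ*S.κ'*(S.e3 f)*H)
       - (S.r*S.κ*S.κ'*S.κ'*S.iκ'*(S.e3 f)*H)) * S.hκ'
    + (-(S.r*S.κ*S.κ'*(S.e3 f)) - (S.r*S.κ*S.κ'*S.κ'*f*H)) * h2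

end RNSetting
end
end

section
/- (Wave equation for Φ3.) In the linearized setting, let α, 𝔣 ∈ I, define Φ0 := r²κ̄²·α, Φ1 := P̄(Φ0), Φ3 := r²κ̄·𝔣, Φ4 := P̄(Φ3), and assume 𝔣 satisfies, exactly in B, the Teukolsky-type equation □𝔣 = ((3/2)κ + 2ω)·e3(𝔣) + ((1/2)κ̄ − 2ω̄)·e4(𝔣) + ((1/2)κκ̄ + 2ωκ̄ − 2ρ − 4κω̄ − 2e4(ω̄) + 4Z²)·𝔣 + ρF·(−2e3(α) − (2κ̄ − 8ω̄)·α). Then, exactly in B: □Φ3 = (1/r)·(κκ̄ − 2ρ)·Φ4 + (−κκ̄ − 3ρ + 4Z²)·Φ3 + ρF·(−(2/r)·Φ1 − Φ0). -/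
/-!
Algebraic model of the linearized Einstein–Maxwell system around Reissner–Nordström.
`B = A[ε]/(ε²)` is modeled by the dual numbers `DualNumber A` over a commutative
`ℝ`-algebra `A`, and the square-zero ideal `I = ε·B` by `smallIdeal A`.
Equality "modulo O(ε²)" is exact equality in `B`; products of two elements of `I` vanish.
-/

set_option maxHeartbeats 2000000

noncomputable section

open scoped DualNumber

namespace RNSetting

variable {A : Type*} [CommRing A] [Algebra ℝ A]

/-- wave equation for `Φ3 = r²κ̄·𝔣`. -/
theorem box_Phi3 (S : RNSetting A) (α frakf : DualNumber A)
    (hα : α ∈ smallIdeal A) (hfrakf : frakf ∈ smallIdeal A)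
    (Φ0 Φ1 Φ3 Φ4 : DualNumber A)
    (hΦ0 : Φ0 = S.r ^ 2 * S.κ' ^ 2 * α) (hΦ1 : Φ1 = S.Pb Φ0)
    (hΦ3 : Φ3 = S.r ^ 2 * S.κ' * frakf) (hΦ4 : Φ4 = S.Pb Φ3)
    (hTeuk : S.box frakf
      = ((3/2 : ℝ) • S.κ + 2 * S.ω) * S.e3 frakf
        + ((1/2 : ℝ) • S.κ' - 2 * S.ω') * S.e4 frakf
        + ((1/2 : ℝ) • (S.κ * S.κ') + 2 * (S.ω * S.κ') - 2 * S.ρ - 4 * (S.κ * S.ω')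
            - 2 * S.e4 S.ω' + 4 * S.Z ^ 2) * frakf
        + S.ρF * (-(2 * S.e3 α) - (2 * S.κ' - 8 * S.ω') * α)) :
    S.box Φ3
      = S.ir * (S.κ * S.κ' - 2 * S.ρ) * Φ4
        + (-(S.κ * S.κ') - 3 * S.ρ + 4 * S.Z ^ 2) * Φ3
        + S.ρF * (-(2 * S.ir * Φ1) - Φ0) := by
  subst hΦ0 hΦ1 hΦ3 hΦ4
  -- products of two elements of the square-zero ideal vanish
  have mulI : ∀ x y : DualNumber A, x ∈ smallIdeal A → y ∈ smallIdeal A → x * y = 0 := by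
    intro x y hx hy
    rw [smallIdeal, Ideal.mem_span_singleton] at hx hy
    obtain ⟨a, rfl⟩ := hx; obtain ⟨b, rfl⟩ := hy
    linear_combination a * b * (DualNumber.eps_mul_eps (R := A))
  have Dtwo : ∀ (D : Derivation ℝ (DualNumber A) (DualNumber A)), D 2 = 0 := by
    intro D
    rw [show (2 : DualNumber A) = ((2 : ℕ) : DualNumber A) by norm_num]
    exact D.map_natCast 2
  have h3f : S.e3 frakf ∈ smallIdeal A := S.pres_e3 _ hfrakf
  have hθf : S.eθ frakf ∈ smallIdeal A := S.pres_eθ _ hfrakf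
  -- algebraMap facts
  have h2c : (2 : DualNumber A) * algebraMap ℝ (DualNumber A) (1/2) = 1 := by
    rw [← map_ofNat (algebraMap ℝ (DualNumber A)) 2, ← map_mul]; norm_num
  have hc32 : algebraMap ℝ (DualNumber A) (3/2)
      = 3 * algebraMap ℝ (DualNumber A) (1/2) := by
    rw [← map_ofNat (algebraMap ℝ (DualNumber A)) 3, ← map_mul]; norm_num
  -- zero-product facts
  have z3rf : S.e3 S.r * frakf = algebraMap ℝ (DualNumber A) (1/2) * (S.r * S.κ') * frakf := by
    have h0 := mulI _ _ S.he3r hfrakf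
    simp only [Algebra.smul_def] at h0; linear_combination h0
  have z3kf : S.e3 S.κ' * frakf
      = (-(algebraMap ℝ (DualNumber A) (1/2) * (S.κ' * S.κ')) - 2 * S.ω' * S.κ') * frakf := by
    have h0 := mulI _ _ S.he3κ' hfrakf
    simp only [Algebra.smul_def] at h0; linear_combination h0
  have z4rf : S.e4 S.r * frakf = algebraMap ℝ (DualNumber A) (1/2) * (S.r * S.κ) * frakf := by
    have h0 := mulI _ _ S.he4r hfrakf
    simp only [Algebra.smul_def] at h0; linear_combination h0
  have z4kf : S.e4 S.κ' * frakf
      = (-(algebraMap ℝ (DualNumber A) (1/2) * (S.κ * S.κ')) + 2 * S.ω * S.κ' + 2 * S.ρ)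
        * frakf := by
    have h0 := mulI _ _ S.he4κ' hfrakf
    simp only [Algebra.smul_def] at h0; linear_combination h0
  have z4r3 : S.e4 S.r * S.e3 frakf
      = algebraMap ℝ (DualNumber A) (1/2) * (S.r * S.κ) * S.e3 frakf := by
    have h0 := mulI _ _ S.he4r h3f
    simp only [Algebra.smul_def] at h0; linear_combination h0
  have z4k3 : S.e4 S.κ' * S.e3 frakf
      = (-(algebraMap ℝ (DualNumber A) (1/2) * (S.κ * S.κ')) + 2 * S.ω * S.κ' + 2 * S.ρ)
        * S.e3 frakf := by
    have h0 := mulI _ _ S.he4κ' h3f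
    simp only [Algebra.smul_def] at h0; linear_combination h0
  have zθr : S.eθ S.r * frakf = 0 := mulI _ _ S.heθr hfrakf
  have zθk : S.eθ S.κ' * frakf = 0 := mulI _ _ S.heθκ' hfrakf
  have zθr2 : S.eθ S.r * S.eθ frakf = 0 := mulI _ _ S.heθr hθf
  have zθk2 : S.eθ S.κ' * S.eθ frakf = 0 := mulI _ _ S.heθκ' hθf
  have z3ra : S.e3 S.r * α = algebraMap ℝ (DualNumber A) (1/2) * (S.r * S.κ') * α := by
    have h0 := mulI _ _ S.he3r hα
    simp only [Algebra.smul_def] at h0; linear_combination h0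
  have z3ka : S.e3 S.κ' * α
      = (-(algebraMap ℝ (DualNumber A) (1/2) * (S.κ' * S.κ')) - 2 * S.ω' * S.κ') * α := by
    have h0 := mulI _ _ S.he3κ' hα
    simp only [Algebra.smul_def] at h0; linear_combination h0
  -- first derivatives of Φ3 and Φ0
  have H3 : S.e3 (S.r ^ 2 * S.κ' * frakf)
      = (S.e3 frakf)*S.κ'*S.r^2 + frakf*((algebraMap ℝ (DualNumber A) (1/2)))*S.κ'^2*S.r^2 - 2*frakf*S.κ'*S.r^2*S.ω' := by
    simp only [pow_two, Derivation.leibniz, smul_eq_mul]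
    linear_combination (2*S.r*S.κ') * z3rf + S.r^2 * z3kf
  have H4 : S.e4 (S.r ^ 2 * S.κ' * frakf)
      = (S.e4 frakf)*S.κ'*S.r^2 + frakf*((algebraMap ℝ (DualNumber A) (1/2)))*S.κ*S.κ'*S.r^2 + 2*frakf*S.κ'*S.r^2*S.ω + 2*frakf*S.r^2*S.ρ := by
    simp only [pow_two, Derivation.leibniz, smul_eq_mul]
    linear_combination (2*S.r*S.κ') * z4rf + S.r^2 * z4kf
  have Ht : S.eθ (S.r ^ 2 * S.κ' * frakf) = (S.eθ frakf)*S.κ'*S.r^2 := by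
    simp only [pow_two, Derivation.leibniz, smul_eq_mul]
    linear_combination (2*S.r*S.κ') * zθr + S.r^2 * zθk
  have HY3 : S.e3 (S.r ^ 2 * S.κ' ^ 2 * α)
      = (S.e3 α)*S.κ'^2*S.r^2 - 4*α*S.κ'^2*S.r^2*S.ω' := by
    simp only [pow_two, Derivation.leibniz, smul_eq_mul]
    linear_combination (2*S.r*S.κ'^2) * z3ra + (2*S.r^2*S.κ') * z3ka
  -- second derivatives
  have H43 : S.e4 (S.e3 (S.r ^ 2 * S.κ' * frakf))
      = (S.e3 frakf)*((algebraMap ℝ (DualNumber A) (1/2)))*S.κ*S.κ'*S.r^2 + 2*(S.e3 frakf)*S.κ'*S.r^2*S.ω + 2*(S.e3 frakf)*S.r^2*S.ρ + (S.e4 (S.e3 frakf))*S.κ'*S.r^2 + (S.e4 frakf)*((algebraMap ℝ (DualNumber A) (1/2)))*S.κ'^2*S.r^2 - 2*(S.e4 frakf)*S.κ'*S.r^2*S.ω' - 2*(S.e4 S.ω')*frakf*S.κ'*S.r^2 - 2*frakf*((algebraMap ℝ (DualNumber A) (1/2)))*S.κ*S.κ'*S.r^2*S.ω' + 4*frakf*((algebraMap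 ℝ (DualNumber A) (1/2)))*S.κ'*S.r^2*S.ρ + 4*frakf*((algebraMap ℝ (DualNumber A) (1/2)))*S.κ'^2*S.r^2*S.ω - 4*frakf*S.κ'*S.r^2*S.ω*S.ω' - 4*frakf*S.r^2*S.ρ*S.ω' := by
    rw [H3]
    simp only [pow_two, map_add, map_sub, map_mul, Derivation.leibniz, smul_eq_mul,
      Derivation.map_algebraMap, Dtwo, mul_zero, zero_mul, add_zero, zero_add]
    linear_combination (2*S.r*S.κ') * z4r3 + S.r^2 * z4k3
      + (2*(algebraMap ℝ (DualNumber A) (1/2))*S.r*S.κ'^2 - 4*S.ω'*S.r*S.κ') * z4rf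
      + (2*(algebraMap ℝ (DualNumber A) (1/2))*S.r^2*S.κ' - 2*S.ω'*S.r^2) * z4kf
  have Htt : S.eθ (S.eθ (S.r ^ 2 * S.κ' * frakf)) = (S.eθ (S.eθ frakf))*S.κ'*S.r^2 := by
    rw [Ht]
    simp only [pow_two, Derivation.leibniz, smul_eq_mul]
    linear_combination (2*S.r*S.κ') * zθr2 + S.r^2 * zθk2
  -- assemble
  simp only [box, Pb, Algebra.smul_def] at hTeuk ⊢
  linear_combination (-1 : DualNumber A) * H43 + Htt
    + (-(algebraMap ℝ (DualNumber A) (1/2) * S.κ')) * H4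
    + (-(algebraMap ℝ (DualNumber A) (1/2) * S.κ) + 2*S.ω
        - S.ir*(S.κ*S.κ' - 2*S.ρ)*S.r*S.iκ') * H3
    + S.Z * Ht
    + (2*S.ρF*S.ir*S.r*S.iκ') * HY3
    + (S.r^2*S.κ') * hTeuk
    + ((S.e3 frakf)*S.κ*S.κ'*S.r^2) * hc32
    + (2*(S.e3 α)*S.iκ'*S.κ'^2*S.r^2*S.ρF - (S.e3 frakf)*S.iκ'*S.κ*S.κ'^2*S.r^2 + 2*(S.e3 frakf)*S.iκ'*S.κ'*S.r^2*S.ρ + 2*α*((algebraMap ℝ (DualNumber A) (1/2)))*S.κ'^2*S.r^2*S.ρF - 8*α*S.iκ'*S.κ'^2*S.r^2*S.ρF*S.ω' - frakf*((algebraMap ℝ (DualNumber A) (1/2)))*S.iκ'*S.κ*S.κ'^3*S.r^2 + 2*frakf*((algebraMap ℝ (DualNumber A) (1/2)))*S.iκ'*S.κ'^2*S.r^2*S.ρ - frakf*((algebraMap ℝ (DualNumber A) (1/2)))*S.κ*S.κ'^2*S.r^2 + 2*frakf*((algebraMap ℝ (DualNumber A) (1/2)))*S.κ'*S.r^2*S.ρ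 + 2*frakf*S.iκ'*S.κ*S.κ'^2*S.r^2*S.ω' - 4*frakf*S.iκ'*S.κ'*S.r^2*S.ρ*S.ω') * S.hr
    + (2*(S.e3 α)*S.κ'*S.r^2*S.ρF - (S.e3 frakf)*S.κ*S.κ'*S.r^2 + 2*(S.e3 frakf)*S.r^2*S.ρ - 8*α*S.κ'*S.r^2*S.ρF*S.ω' - frakf*((algebraMap ℝ (DualNumber A) (1/2)))*S.κ*S.κ'^2*S.r^2 + 2*frakf*((algebraMap ℝ (DualNumber A) (1/2)))*S.κ'*S.r^2*S.ρ + 2*frakf*S.κ*S.κ'*S.r^2*S.ω' - 4*frakf*S.r^2*S.ρ*S.ω') * S.hκ'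
    + ((S.e3 frakf)*S.κ*S.κ'*S.r^2 + α*S.κ'^2*S.r^2*S.ρF - frakf*((algebraMap ℝ (DualNumber A) (1/2)))*S.κ*S.κ'^2*S.r^2 + 2*frakf*S.κ*S.κ'*S.r^2*S.ω' - frakf*S.κ*S.κ'^2*S.r^2 - frakf*S.κ'*S.r^2*S.ρ - 2*frakf*S.κ'^2*S.r^2*S.ω) * h2c

end RNSetting
end
end
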